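/- arXiv:math/0612127 — 3 statements merged into one kernel-verified Lean document; each statement's English description precedes it below -/
import Mathlib

section
/- (Theorem: 𝒟_n = 𝒟_n-tree.) Let n ≥ 1. The set of words reachable from p_n under the reflexive–transitive closure of the relation 'Y ∈ θ(X)' is exactly the set of all Dyck paths of semilength n. -/
open List DyckStep


/-- The pyramid `p_n = U^n D^n`. -/
def pyr (n : ℕ) : List DyckStep := replicate n U ++ replicate n D

/-- A word is *active* if every proper nonempty prefix contains strictly more `U`s than `D`s. -/
def IsActive (w : List DyckStep) : Prop :=
  ∀ i, 0 < i → i < w.length → (w.take i).count D < (w.take i).count U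

/-- The length of the last descent (maximal final run of `D`s). -/
def lastDescentLen (w : List DyckStep) : ℕ := (w.reverse.takeWhile (· == D)).length

/-- The length of the last ascent (run of `U`s immediately preceding the last descent). -/
def lastAscentLen (w : List DyckStep) : ℕ :=
  ((w.reverse.dropWhile (· == D)).takeWhile (· == U)).length

/-- The word with its trailing `D`s removed. -/
def stripD (w : List DyckStep) : List DyckStep := (w.reverse.dropWhile (· == D)).reverse

/-- The inner of a word: the word with its first and its last letter removed. -/
def inner (w : List DyckStep) : List DyckStep := w.dropLast.tail

/-- The operator `θ`.  For an active `P = U·Q·D` with `Q = R·D^m` (`R` not ending in `D`),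
`θ(P) = { R·D^(m-j)·U·D^(j+1) : 0 ≤ j ≤ m }`, where moreover `j = m` is excluded if `P` is
the pyramid; `θ(P) = ∅` if `P` is not active. -/
def theta (P : List DyckStep) : Set (List DyckStep) :=
  { Y | IsActive P ∧ ∃ j ≤ lastDescentLen (inner P),
      (P = pyr (P.count U) → j < lastDescentLen (inner P)) ∧
      Y = stripD (inner P) ++
        (replicate (lastDescentLen (inner P) - j) D ++ (U :: replicate (j + 1) D)) }

/-- Auxiliary: remove the first occurrence of the factor `DU`. -/
def removeFirstDU : List DyckStep → List DyckStep
  | .D :: .U :: rest => rest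
  | x :: rest => x :: removeFirstDU rest
  | [] => []

/-- `τ`: delete the rightmost peak (last occurrence of the factor `UD`),
then prepend a `U` and append a `D`. -/
def tau (w : List DyckStep) : List DyckStep :=
  U :: ((removeFirstDU w.reverse).reverse ++ [D])

/-- The number of peaks (occurrences of the factor `UD`). -/
def numPeaks (w : List DyckStep) : ℕ :=
  ((w.zip w.tail).filter (fun p => p.1 == U && p.2 == D)).length

/-- Auxiliary: swap the first occurrence of the factor `DU` into `UD`. -/
def swapFirstDU : List DyckStep → List DyckStep
  | .D :: .U :: rest => .U :: .D :: rest
  | x :: rest => x :: swapFirstDU rest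
  | [] => []

/-- Overturn the rightmost peak: replace the last occurrence of the factor `UD` by `DU`. -/
def overturnLastPeak (w : List DyckStep) : List DyckStep := (swapFirstDU w.reverse).reverse

/-- The word with its trailing `U`s removed. -/
def stripU (w : List DyckStep) : List DyckStep := (w.reverse.dropWhile (· == U)).reverse

/-- The length of the final run of `U`s. -/
def trailU (w : List DyckStep) : ℕ := (w.reverse.takeWhile (· == U)).length

/-- `op3`: for `P = S·U^a·D^b·U·D` (`S` not ending in `U`, `a, b ≥ 1`), remove the final
pyramid `p_1 = UD`, prepend a `U` and insert a `D` immediately before the last `U` of the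
last ascent, giving `U·S·U^(a-1)·D·U·D^b`. -/
def op3 (P : List DyckStep) : List DyckStep :=
  let W := P.dropLast.dropLast
  U :: (stripU (stripD W) ++
    (replicate (trailU (stripD W) - 1) U ++ (D :: U :: replicate (lastDescentLen W) D)))

/-- The heights of the valleys (occurrences of the factor `DU`) of a word. -/
def valleyHeights (w : List DyckStep) : List ℕ :=
  (List.range w.length).filterMap fun i =>
    if (w.drop i).take 2 = [D, U] then
      some ((w.take (i + 1)).count U - (w.take (i + 1)).count D)
    else none

lemma takeWhile_D_eq_replicate (l : List DyckStep) :
    l.takeWhile (· == D) = replicate (l.takeWhile (· == D)).length D := by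
  apply eq_replicate_of_mem
  intro b hb
  have := mem_takeWhile_imp hb
  simpa using this

lemma stripD_append_ld (w : List DyckStep) :
    stripD w ++ replicate (lastDescentLen w) D = w := by
  have h1 : replicate (lastDescentLen w) D = (w.reverse.takeWhile (· == D)).reverse := by
    rw [lastDescentLen]
    nth_rewrite 2 [takeWhile_D_eq_replicate]
    rw [reverse_replicate]
  rw [stripD, h1, ← reverse_append, takeWhile_append_dropWhile, reverse_reverse]

lemma noTrailD_stripD (w : List DyckStep) :
    (stripD w).reverse.takeWhile (· == D) = [] := by
  rw [stripD, reverse_reverse]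
  have h := takeWhile_append_dropWhile (p := (· == D)) (l := w.reverse.dropWhile (· == D))
  rw [dropWhile_idempotent] at h
  have := congrArg length h
  simp only [length_append] at this
  exact eq_nil_of_length_eq_zero (by omega)

lemma dropWhile_eq_self_of_takeWhile_nil {p : DyckStep → Bool} {l : List DyckStep}
    (h : l.takeWhile p = []) : l.dropWhile p = l := by
  have := takeWhile_append_dropWhile (p := p) (l := l)
  rwa [h, nil_append] at this

lemma ld_append (x : List DyckStep) (t : ℕ) (h : x.reverse.takeWhile (· == D) = []) :
    lastDescentLen (x ++ replicate t D) = t := by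
  rw [lastDescentLen, reverse_append, reverse_replicate,
    takeWhile_append_of_pos (by simp), h]
  simp

lemma stripD_append (x : List DyckStep) (t : ℕ) (h : x.reverse.takeWhile (· == D) = []) :
    stripD (x ++ replicate t D) = x := by
  rw [stripD, reverse_append, reverse_replicate, dropWhile_append_of_pos (by simp),
    dropWhile_eq_self_of_takeWhile_nil h, reverse_reverse]

lemma count_take_append (c : DyckStep) (l1 l2 : List DyckStep) (i : ℕ) :
    ((l1 ++ l2).take i).count c = (l1.take i).count c + (l2.take (i - l1.length)).count c := by
  rw [take_append, count_append]

lemma count_take_replicate (c a : DyckStep) (n i : ℕ) :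
    ((replicate n a).take i).count c = if c = a then min i n else 0 := by
  rw [take_replicate, count_replicate]
  rcases c <;> rcases a <;> simp

lemma step_preserve (P : DyckWord) {Y : List DyckStep} (hY : Y ∈ theta P.toList) :
    ∃ W : DyckWord, W.toList = Y ∧ W.semilength = P.semilength := by
  obtain ⟨hact, j, hj, hpyr, hYeq⟩ := hY
  -- P is nonempty
  have h0 : (0 : DyckWord).toList = [] := rfl
  have hne : P ≠ 0 := by
    rintro rfl
    rw [h0] at hpyr hj
    have : ([] : List DyckStep) = pyr (count U []) := by simp [pyr]
    have h2 := hpyr this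
    have hz : lastDescentLen (inner ([]:List DyckStep)) = 0 := rfl
    rw [hz] at h2
    omega
  have hn : P.IsNested := ⟨hne, fun i hi1 hi2 => hact i hi1 hi2⟩
  set Q := P.denest hn with hQ
  have hQl : Q.toList = inner P.toList := rfl
  set R := stripD Q.toList with hR
  set m := lastDescentLen Q.toList with hm
  have hdec : R ++ replicate m D = Q.toList := stripD_append_ld _
  have hbal : count U R = count D R + m := by
    have h1 := Q.count_U_eq_count_D
    rw [← hdec, count_append, count_append, count_replicate, count_replicate] at h1
    simpa using h1
  have hpre : ∀ i, (R.take i).count D ≤ (R.take i).count U := by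
    intro i
    have h1 := Q.count_D_le_count_U i
    rw [← hdec, count_take_append, count_take_append, count_take_replicate,
      count_take_replicate] at h1
    simp only [if_pos rfl, reduceCtorEq, if_false] at h1
    omega
  have hsemi : P.semilength = Q.semilength + 1 := by
    rw [← Q.semilength_nest, P.nest_denest hn]
  rw [← hQl] at hYeq
  rw [← hQl, ← hm] at hj hpyr
  have hcons : (U :: replicate (j + 1) D) = replicate 1 U ++ replicate (j + 1) D := rfl
  have hYeq' : Y = R ++ (replicate (m - j) D ++ (replicate 1 U ++ replicate (j + 1) D)) := by
    rw [hYeq, hcons]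
  refine ⟨⟨Y, ?_, ?_⟩, rfl, ?_⟩
  · rw [hYeq']
    simp only [count_append, count_replicate]
    simp
    omega
  · intro i
    rw [hYeq']
    simp only [count_take_append, count_take_replicate, length_replicate]
    simp only [if_pos rfl, reduceCtorEq, if_false, if_true]
    rcases le_or_gt i R.length with h | h
    · have h0 : i - R.length = 0 := by omega
      have := hpre i
      simp only [h0]
      simp
      omega
    · rw [take_of_length_le h.le]
      have := hpre R.length
      rw [take_of_length_le le_rfl] at this
      omega
  · show count U Y = P.semilength
    rw [hYeq', hsemi]
    have : Q.semilength = count U R := by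
      rw [DyckWord.semilength, ← hdec, count_append, count_replicate]
      simp
    simp only [count_append, count_replicate]
    simp
    omega

def initU (w : List DyckStep) : ℕ := (w.takeWhile (· == U)).length

lemma length_eq_counts (l : List DyckStep) : l.length = l.count U + l.count D := by
  induction l with
  | nil => simp
  | cons x xs ih => cases x <;> simp [count_cons, ih] <;> omega

lemma takeWhile_U_eq_replicate (l : List DyckStep) :
    l.takeWhile (· == U) = replicate (l.takeWhile (· == U)).length U := by
  apply eq_replicate_of_mem
  intro b hb
  simpa using mem_takeWhile_imp hb

lemma initU_le_count (w : List DyckStep) : initU w ≤ count U w := by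
  conv_rhs => rw [← takeWhile_append_dropWhile (p := (· == U)) (l := w)]
  rw [count_append]
  nth_rewrite 1 [takeWhile_U_eq_replicate]
  simp [initU]

lemma eq_pyr_of_initU (n : ℕ) (W : DyckWord) (hW : W.semilength = n)
    (h : n ≤ initU W.toList) : W.toList = pyr n := by
  set w := W.toList with hw
  have hcu : count U w = n := hW
  have hcd : count D w = n := by rw [← W.count_U_eq_count_D]; exact hW
  have hlen : w.length = 2 * n := by rw [← W.two_mul_semilength_eq_length, hW]
  have htw : w.takeWhile (· == U) = replicate (initU w) U := takeWhile_U_eq_replicate w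
  have hini : initU w = n := le_antisymm ((initU_le_count w).trans_eq hcu) h
  have hsplit : w.takeWhile (· == U) ++ w.dropWhile (· == U) = w :=
    takeWhile_append_dropWhile
  have hcud : count U (w.dropWhile (· == U)) = 0 := by
    have := congrArg (count U) hsplit
    rw [count_append, htw, hini] at this
    simp at this
    omega
  have hlend : (w.dropWhile (· == U)).length = n := by
    have := congrArg length hsplit
    rw [length_append, htw, hini, length_replicate, hlen] at this
    omega
  have hdrep : w.dropWhile (· == U) = replicate n D := by
    apply eq_replicate_of_mem ?_ |>.trans (by rw [hlend])
    · intro b hb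
      rcases b.dichotomy with rfl | rfl
      · exact absurd (count_pos_iff.mpr hb) (by omega)
      · rfl
  rw [pyr, ← hsplit, htw, hini, hdrep]

lemma parent (n : ℕ) (hn : 1 ≤ n) (W : DyckWord) (hW : W.semilength = n)
    (hne : W.toList ≠ pyr n) :
    ∃ P : DyckWord, P.semilength = n ∧ W.toList ∈ theta P.toList ∧
      initU P.toList = initU W.toList + 1 := by
  set w := W.toList with hwdef
  have hcu : count U w = n := hW
  have hcd : count D w = n := by rw [← W.count_U_eq_count_D]; exact hW
  have hlen : w.length = 2 * n := by rw [← W.two_mul_semilength_eq_length, hW]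
  have hwne : w ≠ [] := by intro h; rw [h] at hlen; simp at hlen; omega
  set k := lastDescentLen w with hk
  set S' := stripD w with hS'
  have hdecw : S' ++ replicate k D = w := stripD_append_ld w
  -- k ≥ 1
  have hrevne : w.reverse ≠ [] := by simpa using hwne
  have hk1 : 1 ≤ k := by
    have hgl : w.getLast hwne = D := W.getLast_eq_D hwne
    have hhead : w.reverse.head hrevne = D := by rw [head_reverse]; exact hgl
    have : w.reverse = D :: w.reverse.tail := by rw [← hhead]; exact (cons_head_tail _).symm
    rw [hk, lastDescentLen, this, takeWhile_cons]
    simp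
  -- S' nonempty, ends in U
  have hS'ne : S' ≠ [] := by
    intro h
    rw [h, nil_append] at hdecw
    rw [← hdecw] at hcu
    simp [count_replicate] at hcu
    omega
  have hS'last : S'.getLast hS'ne = U := by
    have hno := noTrailD_stripD w
    rw [← hS'] at hno
    have hrne : S'.reverse ≠ [] := by simpa using hS'ne
    have : S'.reverse = S'.getLast hS'ne :: S'.reverse.tail := by
      rw [← head_reverse hrne]; exact (cons_head_tail _).symm
    rw [this, takeWhile_cons] at hno
    rcases (S'.getLast hS'ne).dichotomy with h | h
    · exact h
    · rw [h] at hno; simp at hno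
  set S := S'.dropLast with hSdef
  have hS : S ++ [U] = S' := by rw [hSdef, ← hS'last]; exact dropLast_append_getLast hS'ne
  set R := stripD S with hRdef
  set a := lastDescentLen S with hadef
  have hdecS : R ++ replicate a D = S := stripD_append_ld S
  have hRno : R.reverse.takeWhile (· == D) = [] := noTrailD_stripD S
  have hw : w = R ++ replicate a D ++ [U] ++ replicate k D := by
    rw [hdecS, hS, hdecw]
  set uR := count U R with huR
  set dR := count D R with hdR
  have hcnt1 : uR + 1 = n := by
    rw [hw] at hcu
    simp [count_append, count_replicate] at hcu
    omega
  have hcnt2 : dR + a + k = n := by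
    rw [hw] at hcd
    simp [count_append, count_replicate] at hcd
    omega
  set r := R.length with hr
  have hrlen : r = uR + dR := by rw [hr, length_eq_counts]
  -- prefix property of R
  have hw' : w = R ++ (replicate a D ++ ([U] ++ replicate k D)) := by
    rw [hw]; simp [append_assoc]
  have hpreR : ∀ i, (R.take i).count D ≤ (R.take i).count U := by
    have key : ∀ i, i ≤ r → (R.take i).count D ≤ (R.take i).count U := by
      intro i h
      have h1 := W.count_D_le_count_U i
      rw [← hwdef, hw', take_append_of_le_length h] at h1
      exact h1
    intro i
    rcases le_or_gt i r with h | h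
    · exact key i h
    · rw [take_of_length_le h.le]
      have := key r le_rfl
      rwa [take_of_length_le le_rfl] at this
  -- the parent word
  set pl := U :: (R ++ replicate (a + k) D) with hpl
  have hpl' : pl = replicate 1 U ++ (R ++ replicate (a + k) D) := rfl
  have hplcU : count U pl = n := by
    rw [hpl]
    simp [count_append, count_replicate]
    omega
  have hplcD : count D pl = n := by
    rw [hpl]
    simp [count_append, count_replicate]
    omega
  have hpllen : pl.length = 2 * n := by
    rw [length_eq_counts, hplcU, hplcD]; omega
  have hplpre : ∀ i, (pl.take i).count D ≤ (pl.take i).count U := by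
    intro i
    rcases Nat.eq_zero_or_pos i with rfl | hi
    · simp
    rw [hpl', count_take_append, count_take_append, count_take_append, count_take_append,
      count_take_replicate, count_take_replicate, count_take_replicate, count_take_replicate]
    simp only [length_replicate, reduceCtorEq, if_false, if_pos rfl, if_true]
    rcases le_or_gt (i - 1) r with h | h
    · have h2 : i - 1 - R.length = 0 := by omega
      rw [h2]
      have := hpreR (i - 1)
      simp only [Nat.zero_min]
      omega
    · rw [take_of_length_le (by omega : R.length ≤ i - 1)]
      have hn1 : min i 1 = 1 := by omega
      omega
  set P : DyckWord := ⟨pl, hplcU.trans hplcD.symm, hplpre⟩ with hP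
  have hPl : P.toList = pl := rfl
  have hinner : inner pl = R ++ replicate (a + k - 1) D := by
    have hrep : replicate (a + k) D = replicate (a + k - 1) D ++ [D] := by
      rw [← replicate_succ']
      congr 1
      omega
    show (pl.dropLast).tail = _
    rw [hpl, hrep, show U :: (R ++ (replicate (a + k - 1) D ++ [D]))
      = (U :: (R ++ replicate (a + k - 1) D)) ++ [D] by simp, dropLast_concat, tail_cons]
  have hld : lastDescentLen (inner pl) = a + k - 1 := by rw [hinner]; exact ld_append _ _ hRno
  have hstrip : stripD (inner pl) = R := by rw [hinner]; exact stripD_append _ _ hRno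
  have hlen2 : pl.length = 1 + (r + (a + k)) := by rw [hpl]; simp; omega
  have hact : IsActive pl := by
    intro i hi0 hilen
    rw [hpl', count_take_append, count_take_append, count_take_append, count_take_append,
      count_take_replicate, count_take_replicate, count_take_replicate, count_take_replicate]
    simp only [length_replicate, reduceCtorEq, if_false, if_pos rfl, if_true]
    rw [hlen2] at hilen
    rcases le_or_gt (i - 1) r with h | h
    · have h2 : i - 1 - R.length = 0 := by omega
      rw [h2]
      have := hpreR (i - 1)
      simp only [Nat.zero_min]
      omega
    · rw [take_of_length_le (by omega : R.length ≤ i - 1)]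
      omega
  refine ⟨P, hplcU, ⟨hact, k - 1, by rw [hld]; omega, ?_, ?_⟩, ?_⟩
  · intro hple
    rw [hld]
    by_contra hcon
    have ha0 : a = 0 := by omega
    rw [hPl, hplcU] at hple
    rw [hpl, ha0, pyr] at hple
    have hnrep : replicate n U = U :: replicate (n - 1) U := by
      rw [← replicate_succ]
      congr 1
      omega
    rw [hnrep] at hple
    simp only [Nat.zero_add, cons_append, cons.injEq, true_and] at hple
    have heq : R ++ replicate k D = replicate (n - 1) U ++ replicate n D := hple
    have hUno : (replicate (n - 1) U).reverse.takeWhile (· == D) = [] := by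
      rw [reverse_replicate, takeWhile_replicate]
      simp
    have hReq : R = replicate (n - 1) U := by
      have := congrArg stripD heq
      rwa [stripD_append _ _ hRno, stripD_append _ _ hUno] at this
    have hkeq : k = n := by
      have := congrArg lastDescentLen heq
      rwa [ld_append _ _ hRno, ld_append _ _ hUno] at this
    apply hne
    rw [hw, hReq, ha0, hkeq, pyr]
    rw [show (replicate n U : List DyckStep) = replicate (n - 1) U ++ [U] by
      rw [← replicate_succ']; congr 1; omega]
    simp
  · rw [hPl, hstrip, hld]
    have e1 : a + k - 1 - (k - 1) = a := by omega
    have e2 : k - 1 + 1 = k := by omega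
    rw [e1, e2, hw]
    simp [append_assoc]
  · rw [hPl]
    have hplinit : initU pl = initU (R ++ replicate (a + k) D) + 1 := by
      rw [hpl, initU, initU, takeWhile_cons]
      simp
    by_cases hall : (R.takeWhile (· == U)).length = R.length
    · have hRtake : R.takeWhile (· == U) = R := (takeWhile_prefix _).eq_of_length hall
      have hRrep : R = replicate r U := by
        conv_lhs => rw [← hRtake]
        rw [takeWhile_U_eq_replicate, hRtake]
      have hdR0 : dR = 0 := by rw [hdR, hRrep, count_replicate]; simp
      have ha1 : 1 ≤ a := by
        by_contra hc
        have ha0 : a = 0 := by omega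
        apply hne
        have hkn : k = n := by omega
        have hreq : r = n - 1 := by omega
        rw [hw, hRrep, ha0, hreq, hkn, pyr]
        rw [show (replicate n U : List DyckStep) = replicate (n - 1) U ++ [U] by
          rw [← replicate_succ']; congr 1; omega]
        simp
      have hallU : ∀ b ∈ R, (b == U) = true := by
        rw [hRrep]
        intro b hb
        rw [eq_of_mem_replicate hb]
        rfl
      have h1 : initU (R ++ replicate (a + k) D) = r := by
        rw [initU, takeWhile_append_of_pos hallU, takeWhile_replicate]
        simp [hr]
      have h2 : initU w = r := by
        rw [hw', initU, takeWhile_append_of_pos hallU]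
        rw [show (replicate a D : List DyckStep) = D :: replicate (a - 1) D by
          rw [← replicate_succ]; congr 1; omega]
        simp [hr]
      omega
    · have h3 : ∀ l, (R ++ l).takeWhile (· == U) = R.takeWhile (· == U) := by
        intro l
        rw [takeWhile_append, if_neg hall]
      have h1 : initU (R ++ replicate (a + k) D) = initU R := by rw [initU, h3]; rfl
      have h2 : initU w = initU R := by rw [hw', initU, h3]; rfl
      omega

def pyrDW (n : ℕ) : DyckWord where
  toList := pyr n
  count_U_eq_count_D := by simp [pyr, count_append, count_replicate]
  count_D_le_count_U i := by
    rw [pyr, count_take_append, count_take_append, count_take_replicate, count_take_replicate,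
      count_take_replicate, count_take_replicate]
    simp only [reduceCtorEq, if_false, if_pos rfl, if_true]
    omega

lemma pyrDW_semilength (n : ℕ) : (pyrDW n).semilength = n := by
  show count U (pyr n) = n
  simp [pyr, count_append, count_replicate]

lemma reach (n : ℕ) (hn : 1 ≤ n) (W : DyckWord) (hW : W.semilength = n) :
    Relation.ReflTransGen (fun a b => b ∈ theta a) (pyr n) W.toList := by
  suffices h : ∀ m (W : DyckWord), W.semilength = n → n - initU W.toList ≤ m →
      Relation.ReflTransGen (fun a b => b ∈ theta a) (pyr n) W.toList from
    h n W hW (by omega)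
  intro m
  induction m with
  | zero =>
    intro W hW hm
    have h1 := initU_le_count W.toList
    have h2 : count U W.toList = n := hW
    have h3 : n ≤ initU W.toList := by omega
    rw [eq_pyr_of_initU n W hW h3]
  | succ m ih =>
    intro W hW hm
    by_cases hp : W.toList = pyr n
    · rw [hp]
    · obtain ⟨P, hP1, hP2, hP3⟩ := parent n hn W hW hp
      have h1 := initU_le_count P.toList
      have h2 : count U P.toList = n := hP1
      exact (ih P hP1 (by omega)).tail hP2

/-- Theorem `𝒟_n = 𝒟_n`-tree: the words reachable from `p_n` under the
reflexive–transitive closure of `Y ∈ θ(X)` are exactly the Dyck paths of semilength `n`. -/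
theorem stmt4 (n : ℕ) (hn : 1 ≤ n) :
    {w : List DyckStep | Relation.ReflTransGen (fun a b => b ∈ theta a) (pyr n) w} =
      {w : List DyckStep | ∃ P : DyckWord, P.semilength = n ∧ P.toList = w} := by
  ext w
  simp only [Set.mem_setOf_eq]
  constructor
  · intro h
    induction h with
    | refl => exact ⟨pyrDW n, pyrDW_semilength n, rfl⟩
    | tail h1 h2 ih =>
      obtain ⟨P, hP, hPl⟩ := ih
      rw [← hPl] at h2
      obtain ⟨V, hV1, hV2⟩ := step_preserve P h2
      exact ⟨V, by rw [hV2, hP], hV1⟩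
  · rintro ⟨P, hP, rfl⟩
    exact reach n hn P hP
end

section
/- (Case 2 in the proof of Proposition 2.) Let n ≥ 2 and let Y be a Dyck path of semilength n with Y ≠ p_n whose last ascent has length at least 2. Then the length of the last ascent of τ(Y) equals the length of the last ascent of Y minus 1. -/
open List DyckStep


lemma rfDU_DU (l : List DyckStep) : removeFirstDU (D :: U :: l) = l := rfl
lemma rfDU_DD (l : List DyckStep) : removeFirstDU (D :: D :: l) = D :: removeFirstDU (D :: l) := rfl

lemma rfDU_rep (k : ℕ) (l : List DyckStep) :
    removeFirstDU (replicate (k + 1) D ++ (U :: l)) = replicate k D ++ l := by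
  induction k with
  | zero => simpa using rfDU_DU l
  | succ m ih =>
      rw [replicate_succ, cons_append, replicate_succ, cons_append, rfDU_DD,
        ← cons_append, ← replicate_succ, ih, replicate_succ, cons_append]

lemma dropWhile_repD (k : ℕ) (l : List DyckStep) :
    dropWhile (· == D) (replicate k D ++ l) = dropWhile (· == D) l := by
  induction k with
  | zero => simp
  | succ m ih => rw [replicate_succ, cons_append, dropWhile_cons_of_pos (by simp), ih]

lemma takeWhile_repU (k : ℕ) (l : List DyckStep) :
    takeWhile (· == U) (replicate k U ++ l) = replicate k U ++ takeWhile (· == U) l := by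
  induction k with
  | zero => simp
  | succ m ih =>
      rw [replicate_succ, cons_append, takeWhile_cons_of_pos (by simp), ih]
      simp

/-- Case 2 in the proof of Proposition 2: if the last ascent of `Y` has length at least 2,
then the last ascent of `τ(Y)` is shorter by one. -/
theorem stmt8 (n : ℕ) (hn : 2 ≤ n) (Y : DyckWord) (hY : Y.semilength = n)
    (hne : Y.toList ≠ pyr n) (ha : 2 ≤ lastAscentLen Y.toList) :
    lastAscentLen (tau Y.toList) = lastAscentLen Y.toList - 1 := by
  set w := Y.toList with hw
  have hlen : w.length = 2 * n := by rw [← Y.two_mul_semilength_eq_length, hY]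
  have hne0 : w ≠ [] := by intro h; rw [h] at hlen; simp at hlen; omega
  set b := lastDescentLen w with hbdef
  set a := lastAscentLen w with hadef
  set t := w.reverse.dropWhile (· == D) with htdef
  set s := t.dropWhile (· == U) with hsdef
  have h1 : w.reverse.takeWhile (· == D) = replicate b D := by
    rw [hbdef, lastDescentLen]
    apply eq_replicate_length.mpr
    intro x hx
    have := mem_takeWhile_imp hx
    simpa using this
  have h2 : t.takeWhile (· == U) = replicate a U := by
    rw [hadef, lastAscentLen, ← htdef]
    apply eq_replicate_length.mpr
    intro x hx
    have := mem_takeWhile_imp hx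
    simpa using this
  have hrdecomp : w.reverse = replicate b D ++ t := by
    rw [← h1, htdef, takeWhile_append_dropWhile]
  have htdecomp : t = replicate a U ++ s := by
    rw [← h2, hsdef, takeWhile_append_dropWhile]
  have hY0 : Y ≠ 0 := DyckWord.toList_ne_nil.mp hne0
  have hlast : w.getLast hne0 = D := Y.getLast_eq_D hne0
  obtain ⟨r', hr'⟩ : ∃ r', w.reverse = D :: r' := by
    refine ⟨w.dropLast.reverse, ?_⟩
    conv_lhs => rw [← dropLast_append_getLast hne0]
    rw [reverse_append, hlast]
    simp
  have hb1 : 1 ≤ b := by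
    rw [hbdef, lastDescentLen, hr', takeWhile_cons_of_pos (by simp)]
    simp
  have hs0 : s ≠ [] := by
    intro hseq
    rw [hseq, append_nil] at htdecomp
    rw [htdecomp] at hrdecomp
    have hwdecomp : w = replicate a U ++ replicate b D := by
      rw [← reverse_reverse w, hrdecomp]
      simp
    have hcu : w.count U = a := by rw [hwdecomp]; simp [count_replicate]
    have hcd : w.count D = b := by rw [hwdecomp]; simp [count_replicate]
    have hUn : w.count U = n := by rw [← hY]; rfl
    have hDn : w.count D = n := by rw [← Y.count_U_eq_count_D]; exact hUn
    have han : a = n := hcu.symm.trans hUn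
    have hbn : b = n := hcd.symm.trans hDn
    exact hne (by rw [hwdecomp, pyr, han, hbn])
  obtain ⟨x, s', hxs⟩ := exists_cons_of_ne_nil hs0
  have hxD : x = D := by
    have h := head_dropWhile_not (· == U) (l := t) (by rw [← hsdef]; exact hs0)
    simp only [← hsdef, hxs, head_cons] at h
    cases x
    · simp at h
    · rfl
  rw [hxD] at hxs
  obtain ⟨a', ha1, ha2⟩ : ∃ a', a = a' + 1 ∧ 1 ≤ a' := ⟨a - 1, by omega, by omega⟩
  obtain ⟨b', hb'⟩ : ∃ b', b = b' + 1 := ⟨b - 1, by omega⟩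
  have hrform : w.reverse = replicate (b' + 1) D ++ (U :: (replicate a' U ++ (D :: s'))) := by
    rw [hrdecomp, htdecomp, hxs, ha1, hb']
    simp [replicate_succ]
  have hrem : removeFirstDU w.reverse = replicate b' D ++ (replicate a' U ++ (D :: s')) := by
    rw [hrform, rfDU_rep]
  have htau : tau w = U :: ((replicate b' D ++ (replicate a' U ++ (D :: s'))).reverse ++ [D]) := by
    rw [tau, hrem]
  have htaurev : (tau w).reverse
      = replicate (b' + 1) D ++ (replicate a' U ++ (D :: (s' ++ [U]))) := by
    rw [htau, replicate_succ, cons_append]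
    simp [reverse_append, append_assoc]
  rw [lastAscentLen, htaurev, dropWhile_repD]
  obtain ⟨a'', ha''⟩ : ∃ a'', a' = a'' + 1 := ⟨a' - 1, by omega⟩
  rw [ha'', replicate_succ, cons_append, dropWhile_cons_of_neg (by simp),
    ← cons_append, ← replicate_succ, ← ha'', takeWhile_repU,
    takeWhile_cons_of_neg (by simp)]
  simp [ha1]
end

section
/- (Termination of iterated θ⁻¹.) Let n ≥ 1 and let Y be a Dyck path of semilength n. Then there exist k ∈ ℕ and a sequence Y = Y₀, Y₁, …, Y_k of Dyck paths of semilength n such that Y_i ≠ p_n and Y_{i+1} = τ(Y_i) for all 0 ≤ i ≤ k − 1, and Y_k = p_n. -/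
open List DyckStep


lemma removeFirstDU_rep (m : ℕ) (s : List DyckStep) :
    removeFirstDU (replicate (m+1) D ++ U :: s) = replicate m D ++ s := by
  induction m with
  | zero => simp [removeFirstDU]
  | succ m ih =>
    rw [replicate_succ, cons_append, replicate_succ, cons_append,
      show removeFirstDU (D :: D :: (replicate m D ++ U :: s))
        = D :: removeFirstDU (D :: (replicate m D ++ U :: s)) from rfl,
      ← cons_append, ← replicate_succ, ih, replicate_succ]
    rfl

lemma ne_pyr_of_decomp (n a : ℕ) (ha : a < n) (L : List DyckStep) (t : List DyckStep)
    (ht : L = replicate a U ++ D :: t) : L ≠ pyr n := by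
  intro h
  have h1 : L.take (a+1) = replicate a U ++ [D] := by
    rw [ht, take_append, take_of_length_le (by simp),
      length_replicate, Nat.add_sub_cancel_left, take_succ_cons, take_zero]
  have h2 : L.take (a+1) = replicate (a+1) U := by
    rw [h, pyr, take_append, take_replicate, length_replicate,
      Nat.sub_eq_zero_of_le (by omega), take_zero, append_nil, min_eq_left (by omega)]
  have := congrArg (List.count D) (h1.symm.trans h2)
  simp [count_replicate] at this

lemma eq_pyr_of_decomp (n : ℕ) (w : DyckWord) (hw : w.semilength = n) (t : List DyckStep)
    (ht : w.toList = replicate n U ++ D :: t) : w.toList = pyr n := by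
  have hU : w.toList.count U = n := hw
  have hlen : w.toList.length = 2 * n := by
    have h2 := w.two_mul_semilength_eq_length
    rw [hw] at h2
    omega
  rw [ht] at hU hlen
  simp [count_append, count_replicate, count_cons, length_append] at hU hlen
  have htD : ∀ x ∈ t, x = D := by
    intro x hx
    rcases x.dichotomy with rfl | rfl
    · exfalso
      have : 1 ≤ t.count U := count_pos_iff.mpr hx
      omega
    · rfl
  have ht2 : t = replicate t.length D := eq_replicate_of_mem htD
  have htl : t.length = n - 1 := by omega
  rw [ht, ht2, htl, pyr]
  congr 1
  rw [← replicate_succ]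
  congr 1
  omega

lemma step (n a : ℕ) (w : DyckWord) (hw : w.semilength = n) (ha : 1 ≤ a) (han : a + 1 ≤ n)
    (t : List DyckStep) (ht : w.toList = replicate a U ++ D :: t) :
    ∃ w' : DyckWord, w'.semilength = n ∧ w'.toList = tau w.toList ∧
      ∃ t', w'.toList = replicate (a+1) U ++ D :: t' := by
  set L := w.toList with hL
  have hU : L.count U = n := hw
  have hD : L.count D = n := w.count_U_eq_count_D ▸ hU
  have hne : L ≠ [] := by
    intro h; rw [h] at hU; simp at hU; omega
  have hrev : L.reverse = L.reverse.takeWhile (· == D) ++ L.reverse.dropWhile (· == D) :=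
    takeWhile_append_dropWhile.symm
  obtain ⟨d, htw⟩ : ∃ d, L.reverse.takeWhile (· == D) = replicate d D :=
    ⟨_, eq_replicate_of_mem (fun b hb => by simpa using mem_takeWhile_imp hb)⟩
  have hdropne : L.reverse.dropWhile (· == D) ≠ [] := by
    intro h
    rw [h, append_nil, htw] at hrev
    have h2 := congrArg (List.count U) hrev
    simp [count_replicate] at h2
    omega
  have hhead : (L.reverse.dropWhile (· == D)).head hdropne = U := by
    have h2 := head_dropWhile_not (· == D) hdropne
    cases hh : (L.reverse.dropWhile (· == D)).head hdropne
    · rfl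
    · rw [hh] at h2; simp at h2
  obtain ⟨s₀, hs₀⟩ : ∃ s₀, L.reverse.dropWhile (· == D) = U :: s₀ :=
    ⟨_, by rw [← hhead]; exact (cons_head_tail hdropne).symm⟩
  have hrev2 : L.reverse = replicate d D ++ U :: s₀ := by rw [hrev, htw, hs₀]
  have hd1 : 1 ≤ d := by
    by_contra hc
    have hd0 : d = 0 := by omega
    rw [hd0, replicate_zero, nil_append] at hrev2
    have hL2 : L = s₀.reverse ++ [U] := by
      have h2 := congrArg List.reverse hrev2
      rw [reverse_reverse, reverse_cons] at h2
      exact h2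
    have hlast : L.getLast hne = D := w.getLast_eq_D hne
    simp [hL2] at hlast
  set s : List DyckStep := s₀.reverse with hs
  have hLs : L = s ++ U :: replicate d D := by
    have h2 := congrArg List.reverse hrev2
    rw [reverse_reverse, reverse_append, reverse_cons, reverse_replicate] at h2
    rw [h2, append_assoc]
    rfl
  have htau : tau L = U :: (s ++ replicate d D) := by
    obtain ⟨m, rfl⟩ : ∃ m, d = m + 1 := ⟨d - 1, by omega⟩
    rw [tau, hrev2, removeFirstDU_rep, reverse_append, reverse_replicate, append_assoc,
      ← replicate_succ']
  have hcU : s.count U + 1 = n := by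
    have h1 := hU
    rw [hLs] at h1
    simp [count_append, count_replicate, count_cons] at h1
    omega
  have hcD : s.count D + d = n := by
    have h1 := hD
    rw [hLs] at h1
    simp [count_append, count_replicate, count_cons] at h1
    omega
  have hLtake : ∀ j, L.take j = s.take j ++ (U :: replicate d D).take (j - s.length) := by
    intro j; rw [hLs, take_append]
  refine ⟨⟨U :: (s ++ replicate d D), ?_, ?_⟩, ?_, ?_, ?_⟩
  · simp [count_append, count_replicate, count_cons]
    omega
  · intro i
    cases i with
    | zero => simp
    | succ j =>
      rw [take_succ_cons]
      simp only [count_cons, take_append, count_append, count_replicate]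
      by_cases hj : j ≤ s.length
      · rw [Nat.sub_eq_zero_of_le hj, take_zero]
        have hw2 := w.count_D_le_count_U j
        rw [← hL, hLtake j, Nat.sub_eq_zero_of_le hj, take_zero, append_nil] at hw2
        simp [count_append]
        omega
      · rw [take_of_length_le (by omega), take_replicate]
        simp
        have : min (j - s.length) d ≤ d := min_le_right _ _
        omega
  · show (U :: (s ++ replicate d D)).count U = n
    simp [count_append, count_replicate, count_cons]
    omega
  · exact htau.symm
  · -- decomposition of the new word
    have hslen : a ≤ s.length := by
      have := count_le_length (a := U) (l := s)
      omega
    rcases Nat.eq_or_lt_of_le hslen with heq | hlt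
    · exfalso
      have hstake : s = L.take s.length := by rw [hLs, take_left]
      rw [← heq] at hstake
      rw [ht, take_append, length_replicate, Nat.sub_self, take_zero,
        append_nil, take_of_length_le (by simp)] at hstake
      rw [hstake] at hLs
      rw [ht] at hLs
      have := append_cancel_left hLs
      simp at this
    · have hstake : s = L.take s.length := by rw [hLs, take_left]
      rw [ht, take_append, length_replicate,
        take_of_length_le (by simp; omega)] at hstake
      obtain ⟨k, hk⟩ : ∃ k, s.length - a = k + 1 := ⟨s.length - a - 1, by omega⟩
      rw [hk, take_succ_cons] at hstake
      refine ⟨t.take k ++ replicate d D, ?_⟩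
      show U :: (s ++ replicate d D) = _
      rw [hstake]
      simp [replicate_succ]

lemma key (n : ℕ) (c : ℕ) : ∀ a, 1 ≤ a → a + c = n → ∀ w : DyckWord, w.semilength = n →
    (∃ t, w.toList = replicate a U ++ D :: t) →
    ∃ f : ℕ → DyckWord, (∀ i ≤ c, (f i).semilength = n) ∧ f 0 = w ∧
      (∀ i < c, (f i).toList ≠ pyr n ∧ (f (i+1)).toList = tau (f i).toList) ∧
      (f c).toList = pyr n := by
  induction c with
  | zero =>
    intro a ha hac w hw hdec
    obtain ⟨t, ht⟩ := hdec
    obtain rfl : a = n := by omega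
    exact ⟨fun _ => w, fun i _ => hw, rfl, fun i hi => absurd hi (by omega),
      eq_pyr_of_decomp _ w hw t ht⟩
  | succ c ih =>
    intro a ha hac w hw hdec
    obtain ⟨t, ht⟩ := hdec
    obtain ⟨w', hw', htau, t', ht'⟩ := step n a w hw ha (by omega) t ht
    obtain ⟨f, h1, h2, h3, h4⟩ := ih (a+1) (by omega) (by omega) w' hw' ⟨t', ht'⟩
    refine ⟨fun i => if i = 0 then w else f (i-1), ?_, ?_, ?_, ?_⟩
    · intro i hi
      by_cases h : i = 0
      · simp [h, hw]
      · simp only [h, if_false]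
        exact h1 (i-1) (by omega)
    · rfl
    · intro i hi
      by_cases h : i = 0
      · subst h
        simp only [if_pos rfl, if_neg (by omega : (1:ℕ) ≠ 0)]
        refine ⟨ne_pyr_of_decomp n a (by omega) w.toList t ht, ?_⟩
        rw [show (1:ℕ) - 1 = 0 from rfl, h2]
        exact htau
      · simp only [h, if_false, if_neg (by omega : i + 1 ≠ 0)]
        have h5 := h3 (i-1) (by omega)
        rw [show i + 1 - 1 = (i-1) + 1 by omega]
        exact h5
    · simp only [if_neg (by omega : c + 1 ≠ 0)]
      rw [show c + 1 - 1 = c from rfl]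
      exact h4

/-- Termination of iterated `θ⁻¹`: iterating `τ` from any Dyck path of semilength `n`
reaches the pyramid `p_n` after finitely many steps. -/
theorem stmt9 (n : ℕ) (hn : 1 ≤ n) (Y : DyckWord) (hY : Y.semilength = n) :
    ∃ (k : ℕ) (f : ℕ → DyckWord), (∀ i ≤ k, (f i).semilength = n) ∧
      f 0 = Y ∧
      (∀ i < k, (f i).toList ≠ pyr n ∧ (f (i + 1)).toList = tau (f i).toList) ∧
      (f k).toList = pyr n := by
  set L := Y.toList with hL
  have hU : L.count U = n := hY
  have hD : L.count D = n := Y.count_U_eq_count_D ▸ hU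
  have hne : L ≠ [] := by intro h; rw [h] at hU; simp at hU; omega
  obtain ⟨a, htw⟩ : ∃ a, L.takeWhile (· == U) = replicate a U :=
    ⟨_, eq_replicate_of_mem (fun b hb => by simpa using mem_takeWhile_imp hb)⟩
  have hsplit : L = replicate a U ++ L.dropWhile (· == U) := by
    rw [← htw, takeWhile_append_dropWhile]
  have hdropne : L.dropWhile (· == U) ≠ [] := by
    intro h
    rw [h, append_nil] at hsplit
    have h2 := congrArg (List.count D) hsplit
    simp [count_replicate] at h2
    omega
  have hhead : (L.dropWhile (· == U)).head hdropne = D := by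
    have h2 := head_dropWhile_not (· == U) hdropne
    cases hh : (L.dropWhile (· == U)).head hdropne
    · rw [hh] at h2; simp at h2
    · rfl
  obtain ⟨t, htt⟩ : ∃ t, L.dropWhile (· == U) = D :: t :=
    ⟨_, by rw [← hhead]; exact (cons_head_tail hdropne).symm⟩
  have hdec : L = replicate a U ++ D :: t := by rw [hsplit, htt]
  have ha1 : 1 ≤ a := by
    by_contra hc
    have ha0 : a = 0 := by omega
    rw [ha0, replicate_zero, nil_append] at hdec
    have h2 := Y.count_D_le_count_U 1
    rw [← hL, hdec] at h2
    simp at h2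
  have han : a ≤ n := by
    have h2 := congrArg (List.count U) hdec
    simp [count_append, count_replicate, count_cons] at h2
    omega
  obtain ⟨f, h1, h2, h3, h4⟩ := key n (n - a) a ha1 (by omega) Y hY ⟨t, hdec⟩
  exact ⟨n - a, f, h1, h2, h3, h4⟩
end
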